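/- For all integers n ≥ 2, a, b ≥ 0 and 0 < r < n, the following identity holds in ℚ: ((a+b+n)/(a+r)) · C(b+n−r−1,b) · C(b+n−1,r−1) · C(a+n−1,a) = ((a+b+n) r / ((a+r)(b+n−r))) · C(n−1,r) · C(a+n−1,a) · C(b+n−1,b), where C(·,·) denotes the binomial coefficient. -/

import Mathlib

/-!
After cancelling the common factor `(a+b+n) C(a+n-1,a) / (a+r)` and clearing `b+n-r`, the
identity only involves `b`, `s = r-1` and `m = n-r-1`, with `N = b+s+m+1`. Absorbing the linear
factors into the neighbouring binomials turns both sides into `(m+1)` times one of the two ways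
of choosing disjoint subsets of sizes `b` and `s` from `N` elements, `C(N,s) C(N-s,b)` and
`C(N,b) C(N-b,s)`.
-/

theorem Nat.choose_mul_choose_sub_comm (N b s : ℕ) :
    N.choose s * (N - s).choose b = N.choose b * (N - b).choose s := by
  have hs := Nat.choose_mul (n := N) (le_add_self : s ≤ b + s)
  have hb := Nat.choose_mul (n := N) (le_self_add : b ≤ b + s)
  rw [Nat.add_sub_cancel] at hs
  rw [Nat.add_sub_cancel_left, Nat.choose_symm_add] at hb
  rw [← hs, ← hb]

theorem Nat.succ_mul_choose_mul_choose_eq (b m s : ℕ) :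
    (b + m + 1) * (b + m).choose b * (b + s + m + 1).choose s =
      (s + 1) * (s + m + 1).choose (s + 1) * (b + s + m + 1).choose b := by
  have hleft : (b + m + 1) * (b + m).choose b = (m + 1) * (b + m + 1).choose b := by
    have := Nat.choose_mul_succ_eq (b + m) b
    rw [show b + m + 1 - b = m + 1 by omega] at this
    rw [mul_comm, this, mul_comm]
  have hright : (s + 1) * (s + m + 1).choose (s + 1) = (m + 1) * (s + m + 1).choose s := by
    have := Nat.choose_succ_right_eq (s + m + 1) s
    rw [show s + m + 1 - s = m + 1 by omega] at this
    rw [mul_comm, this, mul_comm]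
  have hcomm := Nat.choose_mul_choose_sub_comm (b + s + m + 1) b s
  rw [show b + s + m + 1 - s = b + m + 1 by omega,
    show b + s + m + 1 - b = s + m + 1 by omega] at hcomm
  rw [hleft, hright, mul_assoc, mul_assoc, mul_comm ((b + m + 1).choose b), hcomm,
    mul_comm (Nat.choose _ b)]

theorem Nat.sub_mul_choose_mul_choose_pred_eq {n b r : ℕ} (hr0 : 0 < r) (hrn : r < n) :
    (b + n - r) * (b + n - r - 1).choose b * (b + n - 1).choose (r - 1) =
      r * (n - 1).choose r * (b + n - 1).choose b := by
  obtain ⟨s, rfl⟩ : ∃ s, r = s + 1 := ⟨r - 1, by omega⟩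
  obtain ⟨m, rfl⟩ : ∃ m, n = s + m + 2 := ⟨n - s - 2, by omega⟩
  convert Nat.succ_mul_choose_mul_choose_eq b m s using 3 <;> congr 1 <;> omega

theorem weyl_eq_ck_dimension_general (n a b r : ℕ) (hr0 : 0 < r) (hrn : r < n) :
    ((a : ℚ) + b + n) / ((a : ℚ) + r) * (Nat.choose (b + n - r - 1) b : ℚ) *
        (Nat.choose (b + n - 1) (r - 1) : ℚ) * (Nat.choose (a + n - 1) a : ℚ) =
    ((a : ℚ) + b + n) * r / (((a : ℚ) + r) * ((b : ℚ) + n - r)) *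
      (Nat.choose (n - 1) r : ℚ) * (Nat.choose (a + n - 1) a : ℚ) *
      (Nat.choose (b + n - 1) b : ℚ) := by
  have hbnr_cast : (b : ℚ) + n - r = ((b + n - r : ℕ) : ℚ) := by
    push_cast [Nat.cast_sub (by omega : r ≤ b + n)]
    ring
  have key : ((b : ℚ) + n - r) * (b + n - r - 1).choose b * (b + n - 1).choose (r - 1) =
      r * (n - 1).choose r * (b + n - 1).choose b := by
    rw [hbnr_cast]
    exact_mod_cast Nat.sub_mul_choose_mul_choose_pred_eq hr0 hrn
  have har : (a : ℚ) + r ≠ 0 := by positivity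
  have hbnr : (b : ℚ) + n - r ≠ 0 := by
    rw [hbnr_cast]
    exact_mod_cast (by omega : b + n - r ≠ 0)
  field_simp
  linear_combination ((a : ℚ) + b + n) * (a + n - 1).choose a * key

/-- **Agreement of the Weyl dimension formula with the CK dimension formula** for the spaces
of spherical Hermitean monogenics:
`((a+b+n)/(a+r)) C(b+n-r-1,b) C(b+n-1,r-1) C(a+n-1,a)
  = ((a+b+n) r / ((a+r)(b+n-r))) C(n-1,r) C(a+n-1,a) C(b+n-1,b)`. -/
theorem weyl_eq_ck_dimension (n a b r : ℕ) (hn : 2 ≤ n) (hr0 : 0 < r) (hrn : r < n) :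
    ((a : ℚ) + b + n) / ((a : ℚ) + r) * (Nat.choose (b + n - r - 1) b : ℚ) *
        (Nat.choose (b + n - 1) (r - 1) : ℚ) * (Nat.choose (a + n - 1) a : ℚ) =
    ((a : ℚ) + b + n) * r / (((a : ℚ) + r) * ((b : ℚ) + n - r)) *
      (Nat.choose (n - 1) r : ℚ) * (Nat.choose (a + n - 1) a : ℚ) *
      (Nat.choose (b + n - 1) b : ℚ) :=
  weyl_eq_ck_dimension_general n a b r hr0 hrn
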